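/- Let ℓ be a positive integer, x ∈ ℝ∖ℤ, and y > 0. Then the series S := ∑_{n≥1} e^{−2πinx}/n^ℓ converges, for every ε > 0 the series ∑_{n≥1} e^{−2πn(ix+εy)}/(n(1+ε))^ℓ converges absolutely, and lim_{ε→0⁺} ∑_{n≥1} e^{−2πn(ix+εy)}/(n(1+ε))^ℓ = S. -/

import Mathlib

open Complex Real Filter Topology

/-- The limit identity (2.3): for ℓ ≥ 1, x ∈ ℝ∖ℤ and y > 0, the series S = ∑_{n≥1} e^{-2πinx}/n^ℓ
converges, for each ε > 0 the regularized series converges absolutely, and as ε → 0⁺ the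
regularized sums converge to S. -/
theorem stmt12 (ℓ : ℕ) (hℓ : 1 ≤ ℓ) (x : ℝ) (hx : ∀ n : ℤ, x ≠ (n : ℝ))
    (y : ℝ) (hy : 0 < y) :
    ∃ S : ℂ,
      Tendsto (fun N : ℕ => ∑ n ∈ Finset.range N,
          Complex.exp (-(2 * (π : ℂ) * I * ((n : ℂ) + 1) * (x : ℂ))) / ((n : ℂ) + 1) ^ ℓ)
        atTop (𝓝 S) ∧
      (∀ ε : ℝ, 0 < ε → Summable (fun n : ℕ =>
        ‖Complex.exp (-(2 * (π : ℂ) * ((n : ℂ) + 1) * (I * (x : ℂ) + (ε : ℂ) * (y : ℂ)))) /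
          ((((n : ℝ) + 1) * (1 + ε) : ℝ) : ℂ) ^ ℓ‖)) ∧
      Tendsto (fun ε : ℝ => ∑' n : ℕ,
          Complex.exp (-(2 * (π : ℂ) * ((n : ℂ) + 1) * (I * (x : ℂ) + (ε : ℂ) * (y : ℂ)))) /
            ((((n : ℝ) + 1) * (1 + ε) : ℝ) : ℂ) ^ ℓ)
        (𝓝[>] (0 : ℝ)) (𝓝 S) := by
  set z : ℂ := Complex.exp (-(2 * (π : ℂ) * I * (x : ℂ))) with hzdef
  have hz1 : ‖z‖ = 1 := by
    rw [hzdef, Complex.norm_exp]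
    simp
  have hzne : z ≠ 1 := by
    rw [hzdef, Ne, Complex.exp_eq_one_iff]
    push_neg
    intro n h
    apply hx (-n)
    have hI : (2 * (π : ℂ) * I) ≠ 0 := by
      simp [Complex.ofReal_ne_zero, Real.pi_ne_zero, Complex.I_ne_zero]
    have h2 : 2 * (π : ℂ) * I * (-x : ℂ) = 2 * (π : ℂ) * I * (n : ℂ) := by
      linear_combination h
    have h3 := mul_left_cancel₀ hI h2
    have h4 : (x : ℂ) = ((-n : ℤ) : ℂ) := by push_cast; linear_combination -h3
    have := congrArg Complex.re h4
    simpa using this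
  -- the coefficient sequence
  set a : ℕ → ℂ := fun n => z ^ (n + 1) / ((n : ℂ) + 1) ^ ℓ with hadef
  -- numerator identity for the first sum
  have hnum : ∀ n : ℕ, Complex.exp (-(2 * (π : ℂ) * I * ((n : ℂ) + 1) * (x : ℂ))) = z ^ (n + 1) := by
    intro n
    rw [hzdef, ← Complex.exp_nat_mul]
    push_cast
    ring_nf
  -- Dirichlet test: partial sums of a converge
  have hbound : ∀ n : ℕ, ‖∑ i ∈ Finset.range n, z ^ (i + 1)‖ ≤ 2 / ‖z - 1‖ := by
    intro n
    have hz1' : z - 1 ≠ 0 := sub_ne_zero.mpr hzne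
    have : ∑ i ∈ Finset.range n, z ^ (i + 1) = (z ^ n - 1) / (z - 1) * z := by
      rw [← geom_sum_eq hzne]
      rw [Finset.sum_mul]
      exact Finset.sum_congr rfl fun i _ => (pow_succ z i).symm
    rw [this, norm_mul, hz1, mul_one, norm_div]
    gcongr
    calc ‖z ^ n - 1‖ ≤ ‖z ^ n‖ + ‖(1:ℂ)‖ := norm_sub_le _ _
      _ = 2 := by rw [norm_pow, hz1]; norm_num
  have hanti : Antitone (fun n : ℕ => 1 / ((n : ℝ) + 1) ^ ℓ) := by
    intro m n hmn
    have h : ((m:ℝ)+1) ≤ (n:ℝ)+1 := by exact_mod_cast Nat.succ_le_succ hmn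
    dsimp only
    gcongr
  have htend0 : Tendsto (fun n : ℕ => 1 / ((n : ℝ) + 1) ^ ℓ) atTop (𝓝 0) := by
    simp only [one_div]
    apply Tendsto.inv_tendsto_atTop
    exact (tendsto_pow_atTop (by omega)).comp
      (tendsto_atTop_add_const_right atTop 1 tendsto_natCast_atTop_atTop)
  have hcauchy : CauchySeq fun n => ∑ i ∈ Finset.range n,
      (1 / ((i : ℝ) + 1) ^ ℓ) • z ^ (i + 1) :=
    hanti.cauchySeq_series_mul_of_tendsto_zero_of_bounded htend0 hbound
  have hterm : ∀ i : ℕ, (1 / ((i : ℝ) + 1) ^ ℓ) • z ^ (i + 1) = a i := by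
    intro i
    rw [Complex.real_smul, hadef]
    push_cast
    ring
  obtain ⟨S, hS⟩ := cauchySeq_tendsto_of_complete hcauchy
  have hS : Tendsto (fun n => ∑ i ∈ Finset.range n, a i) atTop (𝓝 S) := by
    refine hS.congr fun n => Finset.sum_congr rfl fun i _ => hterm i
  have hsplit : ∀ (ε : ℝ) (n : ℕ),
      Complex.exp (-(2 * (π : ℂ) * ((n : ℂ) + 1) * (I * (x : ℂ) + (ε : ℂ) * (y : ℂ)))) =
        z ^ (n + 1) * ((Real.exp (-(2 * π * ε * y)) ^ (n + 1) : ℝ) : ℂ) := by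
    intro ε n
    have h1 : ((Real.exp (-(2 * π * ε * y)) ^ (n + 1) : ℝ) : ℂ) =
        Complex.exp (((-(2 * π * ε * y) : ℝ) : ℂ)) ^ (n + 1) := by
      push_cast [Complex.ofReal_exp]
      ring
    rw [h1, hzdef, ← mul_pow, ← Complex.exp_add, ← Complex.exp_nat_mul]
    congr 1
    push_cast
    ring
  refine ⟨S, ?_, ?_, ?_⟩
  · refine hS.congr fun n => Finset.sum_congr rfl fun i _ => ?_
    rw [hadef, hnum i]
  · intro ε hε
    set r : ℝ := Real.exp (-(2 * π * ε * y)) with hrdef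
    have hr0 : 0 < r := Real.exp_pos _
    have hr1 : r < 1 := by
      rw [hrdef, Real.exp_lt_one_iff]
      have h2 : 0 < 2 * π * ε * y := by positivity
      linarith
    refine Summable.of_nonneg_of_le (fun n => norm_nonneg _) (fun n => ?_)
      (summable_geometric_of_lt_one hr0.le hr1)
    rw [norm_div, hsplit ε n]
    have hnorm : ‖z ^ (n + 1) * ((r ^ (n + 1) : ℝ) : ℂ)‖ = r ^ (n + 1) := by
      rw [norm_mul, norm_pow, hz1, one_pow, one_mul, Complex.norm_real,
        Real.norm_eq_abs, abs_of_pos (by positivity)]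
    rw [hnorm]
    have hden : (1 : ℝ) ≤ ‖((((n : ℝ) + 1) * (1 + ε) : ℝ) : ℂ) ^ ℓ‖ := by
      rw [norm_pow, Complex.norm_real, Real.norm_eq_abs]
      have h1 : (1 : ℝ) ≤ ((n : ℝ) + 1) * (1 + ε) := by
        have hn : (0:ℝ) ≤ (n : ℝ) := Nat.cast_nonneg n
        nlinarith
      rw [abs_of_pos (by linarith)]
      exact one_le_pow₀ h1
    calc r ^ (n + 1) / ‖((((n : ℝ) + 1) * (1 + ε) : ℝ) : ℂ) ^ ℓ‖
        ≤ r ^ (n + 1) / 1 := by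
          apply div_le_div_of_nonneg_left (by positivity) one_pos hden
      _ = r ^ n * r := by rw [div_one, pow_succ]
      _ ≤ r ^ n * 1 := by gcongr
      _ = r ^ n := mul_one _
  · -- part 3
    have hAbel : Tendsto (fun w : ℂ => ∑' n, a n * w ^ n) ((𝓝[<] (1:ℝ)).map Complex.ofReal)
        (𝓝 S) := Complex.tendsto_tsum_powerSeries_nhdsWithin_lt hS
    have hrt : Tendsto (fun ε : ℝ => Real.exp (-(2 * π * ε * y))) (𝓝[>] (0:ℝ))
        (𝓝[<] (1:ℝ)) := by
      rw [tendsto_nhdsWithin_iff]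
      constructor
      · have hcont : Continuous (fun ε : ℝ => Real.exp (-(2 * π * ε * y))) := by fun_prop
        simpa using (hcont.tendsto 0).mono_left nhdsWithin_le_nhds
      · filter_upwards [self_mem_nhdsWithin] with ε (hε : 0 < ε)
        have := Real.pi_pos
        rw [Set.mem_Iio, Real.exp_lt_one_iff]
        have h2 : 0 < 2 * π * ε * y := by positivity
        linarith
    have hg : Tendsto (fun ε : ℝ => ∑' n, a n * ((Real.exp (-(2 * π * ε * y)) : ℝ) : ℂ) ^ n)
        (𝓝[>] (0:ℝ)) (𝓝 S) := hAbel.comp (tendsto_map.comp hrt)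
    have hc : Tendsto (fun ε : ℝ => ((Real.exp (-(2 * π * ε * y)) : ℝ) : ℂ) / (1 + (ε : ℂ)) ^ ℓ)
        (𝓝[>] (0:ℝ)) (𝓝 1) := by
      have hca : ContinuousAt
          (fun ε : ℝ => ((Real.exp (-(2 * π * ε * y)) : ℝ) : ℂ) / (1 + (ε : ℂ)) ^ ℓ) 0 := by
        apply ContinuousAt.div
        · fun_prop
        · fun_prop
        · simp
      have h2 : Tendsto (fun ε : ℝ => ((Real.exp (-(2 * π * ε * y)) : ℝ) : ℂ) / (1 + (ε : ℂ)) ^ ℓ)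
          (𝓝[>] (0:ℝ)) (𝓝 (((Real.exp (-(2 * π * 0 * y)) : ℝ) : ℂ) / (1 + ((0:ℝ) : ℂ)) ^ ℓ)) :=
        hca.tendsto.mono_left nhdsWithin_le_nhds
      simpa using h2
    have hmul := hc.mul hg
    rw [one_mul] at hmul
    refine hmul.congr' ?_
    filter_upwards [self_mem_nhdsWithin] with ε (hε : 0 < ε)
    rw [← tsum_mul_left]
    apply tsum_congr
    intro n
    rw [hsplit ε n, hadef]
    have hd1 : ((n : ℂ) + 1) ≠ 0 := Nat.cast_add_one_ne_zero n
    have hd2 : (1 + (ε : ℂ)) ≠ 0 := by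
      intro h
      have := congrArg Complex.re h
      simp at this
      linarith
    have hcast : ((((n : ℝ) + 1) * (1 + ε) : ℝ) : ℂ) ^ ℓ =
        ((n : ℂ) + 1) ^ ℓ * (1 + (ε : ℂ)) ^ ℓ := by
      push_cast
      rw [mul_pow]
    rw [hcast]
    push_cast
    field_simp
    ring
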